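/- Random reshuffling deviation bound under relaxed WGC: suppose each $f_i$ is $L_i$-smooth with $L_{\max} = \max_i L_i$, $f = \frac{1}{n}\sum_i f_i$ attains its minimum $f(x^*)$, and $\frac{1}{n}\sum_{i=1}^n\|\nabla f_i(x)\|^2 \leq 2\alpha L(f(x)-f(x^*)) + \sigma^2$ for all $x$. For one epoch of random reshuffling with step size $\eta \leq \frac{1}{\sqrt{3} n L_{\max}}$: $\mathbb{E}\left[\sum_{i=0}^{n-1}\|x_i - x_0\|^2\right] \leq 4\eta^2 n^2 \alpha L (f(x_0)-f(x^*)) + 2\eta^2 n^3 \|\nabla f(x_0)\|^2 + 2\eta^2 n^2 \sigma^2$, where the expectation is over the uniformly random permutation $\pi$ used in the epoch ($x_0$ fixed). -/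

import Mathlib

/-!
Write `x_i - x_0 = -η ∑_{j<i} ∇f_{π j}(x_j)` and compare each gradient with `a_k = ∇f_k(x_0)`.
By `L_max`-smoothness the error in the `i`-th partial sum has square at most
`i L_max² ∑_{j<i} ‖x_j - x_0‖²`, and the step size condition `3 η² n² L_max² ≤ 1` lets this be
absorbed into the left-hand side, so that `∑_i ‖x_i - x_0‖² ≤ 3 η² ∑_i ‖∑_{j<i} a_{π j}‖²`.
The inner sums add up `i` samples drawn without replacement from the `a_k`. Centred at their
mean `∇f(x_0)`, samples at distinct positions are non-positively correlated, so the expected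
square is at most `(i / n) ∑_k ‖a_k‖² + i² ‖∇f(x_0)‖²`. The relaxed weak growth condition at
`x_0` bounds `(1 / n) ∑_k ‖a_k‖²`, and summing over `i < n` gives the constants.
-/

noncomputable section

/-- One epoch of (re)shuffled incremental updates: starting from `x0`, the
iterate after `j` steps using the sample order given by the permutation `π`,
gradient oracle `g` and step size `η`. -/
def epochIter {d n : ℕ}
    (g : Fin n → EuclideanSpace ℝ (Fin d) → EuclideanSpace ℝ (Fin d))
    (η : ℝ) (x0 : EuclideanSpace ℝ (Fin d)) (π : Equiv.Perm (Fin n)) :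
    ℕ → EuclideanSpace ℝ (Fin d)
  | 0 => x0
  | j + 1 =>
      if h : j < n then
        epochIter g η x0 π j - η • g (π ⟨j, h⟩) (epochIter g η x0 π j)
      else epochIter g η x0 π j

open Finset
open scoped RealInnerProductSpace

theorem sum_norm_sub_sq_add_card_mul_norm_sq {ι E : Type*} [NormedAddCommGroup E]
    [InnerProductSpace ℝ E] {s : Finset ι} {a : ι → E} {m : E}
    (hm : ∑ k ∈ s, a k = (#s : ℝ) • m) :
    ∑ k ∈ s, ‖a k - m‖ ^ 2 + #s * ‖m‖ ^ 2 = ∑ k ∈ s, ‖a k‖ ^ 2 := by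
  simp_rw [norm_sub_sq_real]
  rw [sum_add_distrib, sum_sub_distrib, ← mul_sum, ← sum_inner, hm, sum_const,
    real_inner_smul_left, real_inner_self_eq_norm_sq, nsmul_eq_mul]
  ring

namespace Equiv.Perm

variable {β M : Type*} [DecidableEq β] [Fintype β] [AddCommMonoid M]

theorem sum_apply_eq_sum_apply (h : β → M) (j j' : β) :
    ∑ π : Perm β, h (π j) = ∑ π : Perm β, h (π j') :=
  Fintype.sum_equiv (Equiv.mulRight (swap j j')) _ _ fun π => by simp [mul_apply]

omit [Fintype β] in
theorem exists_apply_eq_and_apply_eq {j k j' k' : β} (hjk : j ≠ k) (hjk' : j' ≠ k') :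
    ∃ σ : Perm β, σ j = j' ∧ σ k = k' := by
  refine ⟨swap (swap j j' k) k' * swap j j', ?_, by simp [mul_apply]⟩
  rw [mul_apply, swap_apply_left]
  exact swap_apply_of_ne_of_ne (fun h => hjk ((swap j j').injective (by simpa using h))) hjk'

theorem sum_apply_apply_eq_sum_apply_apply (H : β → β → M) {j k j' k' : β} (hjk : j ≠ k)
    (hjk' : j' ≠ k') :
    ∑ π : Perm β, H (π j) (π k) = ∑ π : Perm β, H (π j') (π k') := by
  obtain ⟨σ, rfl, rfl⟩ := exists_apply_eq_and_apply_eq hjk' hjk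
  exact Fintype.sum_equiv (Equiv.mulRight σ) _ _ fun π => rfl

theorem card_nsmul_sum_apply (h : β → M) (j : β) :
    Fintype.card β • ∑ π : Perm β, h (π j) = Fintype.card (Perm β) • ∑ k, h k := by
  calc Fintype.card β • ∑ π : Perm β, h (π j)
      = ∑ j' : β, ∑ π : Perm β, h (π j') := by
        simp [sum_apply_eq_sum_apply h _ j]
    _ = ∑ π : Perm β, ∑ k, h k := by
        rw [sum_comm]; exact sum_congr rfl fun π _ => Equiv.sum_comp π h
    _ = Fintype.card (Perm β) • ∑ k, h k := by simp

section InnerProduct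

variable {E : Type*} [NormedAddCommGroup E] [InnerProductSpace ℝ E]

/-- Summing over the `k' ≠ j` gives `-‖b (π j)‖²` for each `π`, and by double transitivity
all these off-diagonal sums are equal. -/
theorem sum_inner_apply_apply_nonpos {b : β → E} (hb : ∑ k, b k = 0) {j k : β}
    (hjk : j ≠ k) :
    ∑ π : Perm β, ⟪b (π j), b (π k)⟫ ≤ 0 := by
  have hrow (π : Perm β) :
      ∑ k' ∈ univ.erase j, ⟪b (π j), b (π k')⟫ = -‖b (π j)‖ ^ 2 := by
    rw [← inner_sum, sum_erase_eq_sub (mem_univ j), Equiv.sum_comp π b, hb, zero_sub,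
      inner_neg_right, real_inner_self_eq_norm_sq]
  have hcount : (#(univ.erase j) : ℝ) * ∑ π : Perm β, ⟪b (π j), b (π k)⟫
      = -∑ π : Perm β, ‖b (π j)‖ ^ 2 := by
    rw [← sum_neg_distrib, ← sum_congr rfl fun π _ => hrow π, sum_comm, ← nsmul_eq_mul,
      ← sum_const]
    exact sum_congr rfl fun k' hk' =>
      sum_apply_apply_eq_sum_apply_apply (fun u v => ⟪b u, b v⟫) hjk (ne_of_mem_erase hk').symm
  have hpos : (0 : ℝ) < #(univ.erase j) := by
    exact_mod_cast card_pos.mpr ⟨k, mem_erase.mpr ⟨hjk.symm, mem_univ k⟩⟩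
  have hsq : 0 ≤ ∑ π : Perm β, ‖b (π j)‖ ^ 2 := by positivity
  exact nonpos_of_mul_nonpos_right (hcount ▸ neg_nonpos.mpr hsq) hpos

theorem sum_apply_eq_zero {b : β → E} (hb : ∑ k, b k = 0) (j : β) :
    ∑ π : Perm β, b (π j) = 0 := by
  have h := card_nsmul_sum_apply b j
  rw [hb, smul_zero, ← Nat.cast_smul_eq_nsmul ℝ] at h
  exact (smul_eq_zero.mp h).resolve_left
    (Nat.cast_ne_zero.mpr (Fintype.card_pos_iff.mpr ⟨j⟩).ne')

theorem card_mul_sum_norm_sum_apply_sq_le {b : β → E} (hb : ∑ k, b k = 0) (s : Finset β) :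
    (Fintype.card β : ℝ) * ∑ π : Perm β, ‖∑ j ∈ s, b (π j)‖ ^ 2
      ≤ #s * Fintype.card (Perm β) * ∑ k, ‖b k‖ ^ 2 := by
  have hdiag (j : β) : (Fintype.card β : ℝ) * ∑ π : Perm β, ‖b (π j)‖ ^ 2
      = Fintype.card (Perm β) * ∑ k, ‖b k‖ ^ 2 := by
    simpa only [nsmul_eq_mul] using card_nsmul_sum_apply (fun k => ‖b k‖ ^ 2) j
  have hrow : ∀ j ∈ s, ∑ k ∈ s, ∑ π : Perm β, ⟪b (π j), b (π k)⟫
      ≤ ∑ π : Perm β, ‖b (π j)‖ ^ 2 := by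
    intro j hj
    rw [← add_sum_erase s _ hj]
    simp only [real_inner_self_eq_norm_sq]
    exact add_le_of_nonpos_right <| sum_nonpos fun k hk =>
      sum_inner_apply_apply_nonpos hb (ne_of_mem_erase hk).symm
  calc (Fintype.card β : ℝ) * ∑ π : Perm β, ‖∑ j ∈ s, b (π j)‖ ^ 2
      = Fintype.card β * ∑ j ∈ s, ∑ k ∈ s, ∑ π : Perm β, ⟪b (π j), b (π k)⟫ := by
        simp_rw [← real_inner_self_eq_norm_sq, sum_inner, inner_sum]
        rw [sum_comm]
        simp_rw [sum_comm (s := univ) (t := s)]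
    _ ≤ Fintype.card β * ∑ j ∈ s, ∑ π : Perm β, ‖b (π j)‖ ^ 2 := by
        gcongr with j hj
        exact hrow j hj
    _ = #s * Fintype.card (Perm β) * ∑ k, ‖b k‖ ^ 2 := by
        rw [mul_sum, sum_congr rfl fun j _ => hdiag j, sum_const, nsmul_eq_mul, mul_assoc]

theorem inv_card_mul_sum_norm_sum_apply_sq_le (a : β → E) (s : Finset β) :
    (Fintype.card (Perm β) : ℝ)⁻¹ * ∑ π : Perm β, ‖∑ j ∈ s, a (π j)‖ ^ 2
      ≤ #s / Fintype.card β * ∑ k, ‖a k‖ ^ 2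
        + #s ^ 2 * ‖(Fintype.card β : ℝ)⁻¹ • ∑ k, a k‖ ^ 2 := by
  rcases isEmpty_or_nonempty β with hβ | hβ
  · simp [Finset.eq_empty_of_isEmpty s]
  set m := (Fintype.card β : ℝ)⁻¹ • ∑ k, a k
  have hsum : ∑ k, a k = (#(univ : Finset β) : ℝ) • m := by
    rw [card_univ, smul_inv_smul₀ (by positivity)]
  have hb : ∑ k, (a k - m) = 0 := by
    rw [sum_sub_distrib, hsum, sum_const, Nat.cast_smul_eq_nsmul, sub_self]
  have hvar : ∑ k, ‖a k - m‖ ^ 2 ≤ ∑ k, ‖a k‖ ^ 2 := by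
    rw [← sum_norm_sub_sq_add_card_mul_norm_sq hsum]
    exact le_add_of_nonneg_right (mul_nonneg (Nat.cast_nonneg _) (sq_nonneg _))
  have hcross : ∑ π : Perm β, ⟪∑ j ∈ s, (a (π j) - m), m⟫ = 0 := by
    simp_rw [sum_inner]
    rw [sum_comm]
    exact sum_eq_zero fun j _ => by rw [← sum_inner, sum_apply_eq_zero hb j, inner_zero_left]
  have hsplit (π : Perm β) : ‖∑ j ∈ s, a (π j)‖ ^ 2
      = ‖∑ j ∈ s, (a (π j) - m)‖ ^ 2 + 2 * #s * ⟪∑ j ∈ s, (a (π j) - m), m⟫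
        + #s ^ 2 * ‖m‖ ^ 2 := by
    rw [sum_sub_distrib, sum_const, ← Nat.cast_smul_eq_nsmul ℝ]
    conv_lhs => rw [← sub_add_cancel (∑ j ∈ s, a (π j)) ((#s : ℝ) • m)]
    rw [norm_add_sq_real, real_inner_smul_right, norm_smul, Real.norm_natCast, mul_pow]
    ring
  have hperm : (0 : ℝ) < Fintype.card (Perm β) := by positivity
  rw [sum_congr rfl fun π _ => hsplit π, sum_add_distrib, sum_add_distrib, ← mul_sum, hcross,
    mul_zero, add_zero, sum_const, card_univ, nsmul_eq_mul, mul_add,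
    inv_mul_cancel_left₀ hperm.ne']
  refine add_le_add_left ?_ _
  calc (Fintype.card (Perm β) : ℝ)⁻¹ * ∑ π : Perm β, ‖∑ j ∈ s, (a (π j) - m)‖ ^ 2
      ≤ #s / Fintype.card β * ∑ k, ‖a k - m‖ ^ 2 := by
        rw [inv_mul_le_iff₀ hperm, div_mul_eq_mul_div, mul_div_assoc',
          le_div_iff₀ (by positivity)]
        linarith [card_mul_sum_norm_sum_apply_sq_le hb s]
    _ ≤ #s / Fintype.card β * ∑ k, ‖a k‖ ^ 2 :=
        mul_le_mul_of_nonneg_left hvar (div_nonneg (Nat.cast_nonneg _) (Nat.cast_nonneg _))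

theorem inv_factorial_mul_sum_norm_prefix_sum_sq_le {n : ℕ} (a : Fin n → E) {i : ℕ}
    (hi : i ≤ n) :
    ((Nat.factorial n : ℝ))⁻¹ * ∑ π : Perm (Fin n),
      ‖∑ k ∈ univ.filter (fun k : Fin n => (k : ℕ) < i), a (π k)‖ ^ 2
        ≤ i * ((n : ℝ)⁻¹ * ∑ k, ‖a k‖ ^ 2)
          + i ^ 2 * ‖(n : ℝ)⁻¹ • ∑ k, a k‖ ^ 2 := by
  have h := inv_card_mul_sum_norm_sum_apply_sq_le a (univ.filter fun k : Fin n => (k : ℕ) < i)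
  rw [Fintype.card_perm, Fintype.card_fin, Fin.card_filter_val_lt, min_eq_right hi] at h
  rwa [div_mul_eq_mul_div, mul_div_assoc, div_eq_inv_mul] at h

end InnerProduct

end Equiv.Perm

theorem two_mul_sum_range_cast_le (n : ℕ) : 2 * ∑ i ∈ range n, (i : ℝ) ≤ n ^ 2 := by
  have h : (∑ i ∈ range n, i) * 2 ≤ n ^ 2 := by
    rw [sum_range_id_mul_two, sq]
    exact Nat.mul_le_mul_left n (Nat.sub_le n 1)
  have := (Nat.cast_le (α := ℝ)).mpr h
  push_cast at this
  linarith

theorem three_mul_sum_range_le {W G : ℝ} (hW : 0 ≤ W) (hG : 0 ≤ G) (n : ℕ) :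
    3 * ∑ i ∈ range n, ((i : ℝ) * W + (i : ℝ) ^ 2 * G)
      ≤ 2 * n ^ 2 * W + 2 * n ^ 3 * G := by
  have hgauss := two_mul_sum_range_cast_le n
  have hsq : ∑ i ∈ range n, (i : ℝ) ^ 2 ≤ n * ∑ i ∈ range n, (i : ℝ) := by
    rw [mul_sum]
    gcongr with i hi
    rw [sq]
    gcongr
    exact_mod_cast (mem_range.mp hi).le
  rw [sum_add_distrib, ← sum_mul, ← sum_mul]
  have hn : (0 : ℝ) ≤ n := n.cast_nonneg
  nlinarith [mul_le_mul_of_nonneg_right hgauss hW, mul_le_mul_of_nonneg_right hsq hG,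
    mul_le_mul_of_nonneg_right (mul_le_mul_of_nonneg_left hgauss hn) hG,
    mul_nonneg (pow_nonneg hn 2) hW, mul_nonneg (pow_nonneg hn 3) hG]

section Iterates

variable {ι E : Type*} [SeminormedAddCommGroup E]

theorem norm_add_sq_le (u v : E) : ‖u + v‖ ^ 2 ≤ 2 * (‖u‖ ^ 2 + ‖v‖ ^ 2) :=
  (pow_le_pow_left₀ (norm_nonneg _) (norm_add_le u v) 2).trans add_sq_le

theorem norm_sum_sq_le_card_mul (s : Finset ι) (u : ι → E) :
    ‖∑ i ∈ s, u i‖ ^ 2 ≤ #s * ∑ i ∈ s, ‖u i‖ ^ 2 :=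
  (pow_le_pow_left₀ (norm_nonneg _) (norm_sum_le _ _) 2).trans sq_sum_le_card_mul_sum_sq

variable [NormedSpace ℝ E]

theorem norm_sub_sq_le_of_sub_eq_neg_smul_sum {x v w : ℕ → E} {η M : ℝ} {i : ℕ}
    (hx : x i - x 0 = -(η • ∑ j ∈ range i, v j))
    (hvw : ∀ j < i, ‖v j - w j‖ ≤ M * ‖x j - x 0‖) :
    ‖x i - x 0‖ ^ 2 ≤ 2 * η ^ 2 * i * M ^ 2 * ∑ j ∈ range i, ‖x j - x 0‖ ^ 2
      + 2 * η ^ 2 * ‖∑ j ∈ range i, w j‖ ^ 2 := by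
  have hsplit :
      ∑ j ∈ range i, v j = ∑ j ∈ range i, (v j - w j) + ∑ j ∈ range i, w j := by
    rw [← sum_add_distrib]
    simp only [sub_add_cancel]
  have hdrift : ‖∑ j ∈ range i, (v j - w j)‖ ^ 2
      ≤ i * (M ^ 2 * ∑ j ∈ range i, ‖x j - x 0‖ ^ 2) := by
    refine (norm_sum_sq_le_card_mul _ _).trans ?_
    rw [card_range, mul_sum (range i) _ (M ^ 2)]
    gcongr with j hj
    rw [← mul_pow]
    exact pow_le_pow_left₀ (norm_nonneg _) (hvw j (mem_range.mp hj)) 2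
  calc ‖x i - x 0‖ ^ 2 = η ^ 2 * ‖∑ j ∈ range i, v j‖ ^ 2 := by
        rw [hx, norm_neg, norm_smul, mul_pow, Real.norm_eq_abs, sq_abs]
    _ ≤ η ^ 2 * (2 * (‖∑ j ∈ range i, (v j - w j)‖ ^ 2
          + ‖∑ j ∈ range i, w j‖ ^ 2)) := by
        rw [hsplit]
        gcongr
        exact norm_add_sq_le _ _
    _ ≤ η ^ 2 * (2 * (i * (M ^ 2 * ∑ j ∈ range i, ‖x j - x 0‖ ^ 2)
          + ‖∑ j ∈ range i, w j‖ ^ 2)) := by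
        gcongr
    _ = _ := by ring

theorem sum_norm_sub_sq_le_of_iterate {x v w : ℕ → E} {η M : ℝ} {n : ℕ}
    (hx : ∀ j, x (j + 1) = x j - η • v j)
    (hvw : ∀ j < n, ‖v j - w j‖ ≤ M * ‖x j - x 0‖)
    (hη : 3 * (η * n * M) ^ 2 ≤ 1) :
    ∑ i ∈ range n, ‖x i - x 0‖ ^ 2
      ≤ 3 * η ^ 2 * ∑ i ∈ range n, ‖∑ j ∈ range i, w j‖ ^ 2 := by
  set T := ∑ i ∈ range n, ‖x i - x 0‖ ^ 2
  have hT : 0 ≤ T := by positivity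
  have hsum (i : ℕ) : x i - x 0 = -(η • ∑ j ∈ range i, v j) := by
    rw [← sum_range_sub x, smul_sum, ← sum_neg_distrib]
    refine sum_congr rfl fun j _ => ?_
    rw [hx j]
    abel
  have hstep : ∀ i ∈ range n, ‖x i - x 0‖ ^ 2
      ≤ 2 * η ^ 2 * M ^ 2 * T * i + 2 * η ^ 2 * ‖∑ j ∈ range i, w j‖ ^ 2 := by
    intro i hi
    have hin := mem_range.mp hi
    refine (norm_sub_sq_le_of_sub_eq_neg_smul_sum (hsum i)
      fun j hj => hvw j (hj.trans hin)).trans ?_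
    have hpartial : ∑ j ∈ range i, ‖x j - x 0‖ ^ 2 ≤ T :=
      sum_le_sum_of_subset_of_nonneg (range_subset_range.mpr hin.le) fun _ _ _ => by positivity
    have : 0 ≤ 2 * η ^ 2 * i * M ^ 2 := by positivity
    nlinarith
  have habsorb : 2 * η ^ 2 * M ^ 2 * T * ∑ i ∈ range n, (i : ℝ) ≤ T / 3 := by
    have := two_mul_sum_range_cast_le n
    calc 2 * η ^ 2 * M ^ 2 * T * ∑ i ∈ range n, (i : ℝ)
        = η ^ 2 * M ^ 2 * T * (2 * ∑ i ∈ range n, (i : ℝ)) := by ring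
      _ ≤ η ^ 2 * M ^ 2 * T * n ^ 2 := by gcongr
      _ ≤ T / 3 := by nlinarith
  have htotal := sum_le_sum hstep
  rw [sum_add_distrib, ← mul_sum, ← mul_sum] at htotal
  linarith

end Iterates

theorem Fin.sum_filter_val_lt_eq_sum_range {M : Type*} [AddCommMonoid M] {n : ℕ}
    (f : Fin n → M) (i : ℕ) :
    ∑ k ∈ univ.filter (fun k : Fin n => (k : ℕ) < i), f k
      = ∑ j ∈ range i, if h : j < n then f ⟨j, h⟩ else 0 := by
  induction i with
  | zero => simp
  | succ i ih =>
    rw [sum_range_succ, ← ih]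
    split_ifs with h
    · have : univ.filter (fun k : Fin n => (k : ℕ) < i + 1)
          = insert ⟨i, h⟩ (univ.filter fun k : Fin n => (k : ℕ) < i) := by
        ext k
        simp only [mem_filter, mem_univ, true_and, mem_insert, Fin.ext_iff]
        omega
      rw [this, sum_insert (by simp), add_comm]
    · have : univ.filter (fun k : Fin n => (k : ℕ) < i + 1)
          = univ.filter fun k : Fin n => (k : ℕ) < i := by
        ext k
        simp only [mem_filter, mem_univ, true_and]
        omega
      rw [this, add_zero]

theorem gradient_const_mul_sum {F ι : Type*} [NormedAddCommGroup F] [InnerProductSpace ℝ F]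
    [CompleteSpace F] {f : ι → F → ℝ} (s : Finset ι) (c : ℝ) {x : F}
    (hf : ∀ i ∈ s, DifferentiableAt ℝ (f i) x) :
    gradient (fun y => c * ∑ i ∈ s, f i y) x = c • ∑ i ∈ s, gradient (f i) x := by
  have hderiv : HasFDerivAt (fun y => c * ∑ i ∈ s, f i y)
      (c • ∑ i ∈ s, InnerProductSpace.toDual ℝ F (gradient (f i) x)) x :=
    (HasFDerivAt.fun_sum fun i hi => (hf i hi).hasGradientAt.hasFDerivAt).const_mul c
  rw [← map_sum, ← map_smul] at hderiv
  simpa only [LinearIsometryEquiv.symm_apply_apply] using hderiv.hasGradientAt.gradient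

namespace epochIter

variable {d n : ℕ} (g : Fin n → EuclideanSpace ℝ (Fin d) → EuclideanSpace ℝ (Fin d))
  (η : ℝ) (x0 : EuclideanSpace ℝ (Fin d)) (π : Equiv.Perm (Fin n))

theorem succ (j : ℕ) : epochIter g η x0 π (j + 1) = epochIter g η x0 π j
    - η • if h : j < n then g (π ⟨j, h⟩) (epochIter g η x0 π j) else 0 := by
  rw [epochIter]
  split_ifs <;> simp

theorem sum_norm_sub_sq_le {M : ℝ} (hg : ∀ k x, ‖g k x - g k x0‖ ≤ M * ‖x - x0‖)
    (hη : 3 * (η * n * M) ^ 2 ≤ 1) :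
    ∑ i ∈ range n, ‖epochIter g η x0 π i - x0‖ ^ 2
      ≤ 3 * η ^ 2 * ∑ i ∈ range n,
          ‖∑ k ∈ univ.filter (fun k : Fin n => (k : ℕ) < i), g (π k) x0‖ ^ 2 := by
  have := sum_norm_sub_sq_le_of_iterate (succ g η x0 π)
    (w := fun j => if h : j < n then g (π ⟨j, h⟩) x0 else 0)
    (fun j hj => by simp only [dif_pos hj]; exact hg _ _) hη
  simpa only [Fin.sum_filter_val_lt_eq_sum_range, epochIter] using this

theorem inv_factorial_mul_sum_sum_norm_sub_sq_le {M : ℝ}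
    (hg : ∀ k x, ‖g k x - g k x0‖ ≤ M * ‖x - x0‖) (hη : 3 * (η * n * M) ^ 2 ≤ 1) :
    ((Nat.factorial n : ℝ))⁻¹ * ∑ π : Equiv.Perm (Fin n), ∑ i ∈ range n,
        ‖epochIter g η x0 π i - x0‖ ^ 2
      ≤ 3 * η ^ 2 * ∑ i ∈ range n, ((i : ℝ) * ((n : ℝ)⁻¹ * ∑ k, ‖g k x0‖ ^ 2)
          + (i : ℝ) ^ 2 * ‖(n : ℝ)⁻¹ • ∑ k, g k x0‖ ^ 2) := by
  calc ((Nat.factorial n : ℝ))⁻¹ * ∑ π : Equiv.Perm (Fin n), ∑ i ∈ range n,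
        ‖epochIter g η x0 π i - x0‖ ^ 2
      ≤ ((Nat.factorial n : ℝ))⁻¹ * ∑ π : Equiv.Perm (Fin n),
          3 * η ^ 2 * ∑ i ∈ range n,
            ‖∑ k ∈ univ.filter (fun k : Fin n => (k : ℕ) < i), g (π k) x0‖ ^ 2 := by
        gcongr with π
        exact sum_norm_sub_sq_le g η x0 π hg hη
    _ = 3 * η ^ 2 * ∑ i ∈ range n,
          ((Nat.factorial n : ℝ))⁻¹ * ∑ π : Equiv.Perm (Fin n),
            ‖∑ k ∈ univ.filter (fun k : Fin n => (k : ℕ) < i), g (π k) x0‖ ^ 2 := by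
        simp only [← mul_sum]
        rw [sum_comm]
        ring
    _ ≤ _ := mul_le_mul_of_nonneg_left (sum_le_sum fun i hi =>
        Equiv.Perm.inv_factorial_mul_sum_norm_prefix_sum_sq_le (fun k => g k x0)
          (mem_range.mp hi).le) (by positivity)

end epochIter

theorem three_mul_sq_le_one_of_le_one_div {η n M : ℝ} (hη0 : 0 < η)
    (hη : η ≤ 1 / (Real.sqrt 3 * n * M)) : 3 * (η * n * M) ^ 2 ≤ 1 := by
  have hc : 0 < Real.sqrt 3 * n * M := one_div_pos.mp (hη0.trans_le hη)
  calc 3 * (η * n * M) ^ 2 = (η * (Real.sqrt 3 * n * M)) ^ 2 := by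
        simp only [mul_pow, Real.sq_sqrt (by norm_num : (0 : ℝ) ≤ 3)]; ring
    _ ≤ 1 := pow_le_one₀ (by positivity) ((le_div_iff₀ hc).mp hη)

theorem rr_deviation_bound_relaxed_wgc_general
    (d n : ℕ)
    (f : Fin n → EuclideanSpace ℝ (Fin d) → ℝ)
    (hdiff : ∀ i, Differentiable ℝ (f i))
    (F : EuclideanSpace ℝ (Fin d) → ℝ)
    (hF : F = fun x => (n : ℝ)⁻¹ * ∑ i, f i x)
    (L Lmax : ℝ)
    (hsmooth_i : ∀ i, ∀ x y : EuclideanSpace ℝ (Fin d),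
      ‖gradient (f i) x - gradient (f i) y‖ ≤ Lmax * ‖x - y‖)
    (xstar : EuclideanSpace ℝ (Fin d))
    (α σ : ℝ)
    (hWGC : ∀ x, (n : ℝ)⁻¹ * ∑ i, ‖gradient (f i) x‖ ^ 2
      ≤ 2 * α * L * (F x - F xstar) + σ ^ 2)
    (η : ℝ) (hη0 : 0 < η) (hη : η ≤ 1 / (Real.sqrt 3 * n * Lmax))
    (x0 : EuclideanSpace ℝ (Fin d)) :
    ((Nat.factorial n : ℝ))⁻¹ *
        ∑ π : Equiv.Perm (Fin n), ∑ i ∈ Finset.range n,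
          ‖epochIter (fun i => gradient (f i)) η x0 π i - x0‖ ^ 2
      ≤ 4 * η ^ 2 * n ^ 2 * α * L * (F x0 - F xstar)
        + 2 * η ^ 2 * n ^ 3 * ‖gradient F x0‖ ^ 2
        + 2 * η ^ 2 * n ^ 2 * σ ^ 2 := by
  have hgrad : gradient F x0 = (n : ℝ)⁻¹ • ∑ k, gradient (f k) x0 := by
    subst hF
    exact gradient_const_mul_sum univ _ fun i _ => (hdiff i).differentiableAt
  set W := (n : ℝ)⁻¹ * ∑ k, ‖gradient (f k) x0‖ ^ 2
  have hW : W ≤ 2 * α * L * (F x0 - F xstar) + σ ^ 2 := hWGC x0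
  calc ((Nat.factorial n : ℝ))⁻¹ * ∑ π : Equiv.Perm (Fin n), ∑ i ∈ range n,
        ‖epochIter (fun i => gradient (f i)) η x0 π i - x0‖ ^ 2
      ≤ 3 * η ^ 2 * ∑ i ∈ range n,
          ((i : ℝ) * W + (i : ℝ) ^ 2 * ‖gradient F x0‖ ^ 2) := by
        rw [hgrad]
        exact epochIter.inv_factorial_mul_sum_sum_norm_sub_sq_le _ η x0
          (fun k x => hsmooth_i k x x0) (three_mul_sq_le_one_of_le_one_div hη0 hη)
    _ ≤ η ^ 2 * (2 * n ^ 2 * W + 2 * n ^ 3 * ‖gradient F x0‖ ^ 2) := by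
        have := three_mul_sum_range_le (by positivity : 0 ≤ W) (sq_nonneg ‖gradient F x0‖) n
        nlinarith [sq_nonneg η]
    _ ≤ _ := by
        nlinarith [mul_le_mul_of_nonneg_left hW (by positivity : (0 : ℝ) ≤ 2 * η ^ 2 * n ^ 2)]

/-- Random reshuffling within-epoch deviation bound under the relaxed weak
growth condition; the expectation is over the uniformly random permutation. -/
theorem rr_deviation_bound_relaxed_wgc
    (d n : ℕ) (hn : 2 ≤ n)
    (f : Fin n → EuclideanSpace ℝ (Fin d) → ℝ)
    (hdiff : ∀ i, Differentiable ℝ (f i))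
    (F : EuclideanSpace ℝ (Fin d) → ℝ)
    (hF : F = fun x => (n : ℝ)⁻¹ * ∑ i, f i x)
    (L Lmax : ℝ) (hL : 0 < L) (hLmax : 0 < Lmax)
    (hsmooth : ∀ x y : EuclideanSpace ℝ (Fin d),
      ‖gradient F x - gradient F y‖ ≤ L * ‖x - y‖)
    (hsmooth_i : ∀ i, ∀ x y : EuclideanSpace ℝ (Fin d),
      ‖gradient (f i) x - gradient (f i) y‖ ≤ Lmax * ‖x - y‖)
    (xstar : EuclideanSpace ℝ (Fin d))
    (hmin : ∀ x, F xstar ≤ F x)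
    (α σ : ℝ) (hα : 0 ≤ α) (hσ : 0 ≤ σ)
    (hWGC : ∀ x, (n : ℝ)⁻¹ * ∑ i, ‖gradient (f i) x‖ ^ 2
      ≤ 2 * α * L * (F x - F xstar) + σ ^ 2)
    (η : ℝ) (hη0 : 0 < η) (hη : η ≤ 1 / (Real.sqrt 3 * n * Lmax))
    (x0 : EuclideanSpace ℝ (Fin d)) :
    ((Nat.factorial n : ℝ))⁻¹ *
        ∑ π : Equiv.Perm (Fin n), ∑ i ∈ Finset.range n,
          ‖epochIter (fun i => gradient (f i)) η x0 π i - x0‖ ^ 2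
      ≤ 4 * η ^ 2 * n ^ 2 * α * L * (F x0 - F xstar)
        + 2 * η ^ 2 * n ^ 3 * ‖gradient F x0‖ ^ 2
        + 2 * η ^ 2 * n ^ 2 * σ ^ 2 :=
  rr_deviation_bound_relaxed_wgc_general d n f hdiff F hF L Lmax hsmooth_i xstar α σ hWGC η hη0 hη
    x0
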